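/- In a medium, for every token τ and every state P, exactly one of τ and its reverse τ̃ belongs to the token content of P. -/

import Mathlib

variable {S : Type*}

/-- Result of applying message `m` (a list of tokens) to state `P`. -/
def mApply (m : List (S → S)) (P : S) : S := m.foldl (fun s τ => τ s) P

/-- `τ'` is a reverse of `τ`. -/
def IsReverse (τ τ' : S → S) : Prop := ∀ P Q : S, P ≠ Q → (τ P = Q ↔ τ' Q = P)

/-- `(S, T)` is a token system. -/
def IsTokenSystem (T : Set (S → S)) : Prop :=
  Nontrivial S ∧ T.Nonempty ∧ ∀ τ ∈ T, τ ≠ id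

/-- `m` is a message of the token system with token set `T`. -/
def IsMsg (T : Set (S → S)) (m : List (S → S)) : Prop := ∀ τ ∈ m, τ ∈ T

/-- `m` is stepwise effective for `P`. -/
def StepwiseEff : List (S → S) → S → Prop
  | [], _ => True
  | τ :: rest, P => τ P ≠ P ∧ StepwiseEff rest (τ P)

/-- `m` is consistent: it contains no token together with a reverse of it. -/
def Consistent (m : List (S → S)) : Prop :=
  ∀ τ ∈ m, ∀ τ' ∈ m, ¬ IsReverse τ τ'

/-- `m` is concise for `P`. -/
def Concise (T : Set (S → S)) (m : List (S → S)) (P : S) : Prop :=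
  IsMsg T m ∧ Consistent m ∧ StepwiseEff m P ∧ m.Nodup

/-- `m` is a return message for `P`. -/
def IsReturn (m : List (S → S)) (P : S) : Prop :=
  StepwiseEff m P ∧ mApply m P = P

/-- `m` is vacuous: its indices partition into pairs of mutually reverse tokens. -/
def Vacuous (m : List (S → S)) : Prop :=
  ∃ σ : Equiv.Perm (Fin m.length),
    (∀ i, σ i ≠ i) ∧ (∀ i, σ (σ i) = i) ∧
    ∀ i, IsReverse (m.get i) (m.get (σ i))

/-- `(S, T)` is a medium: token system satisfying [Ma] and [Mb]. -/
def IsMedium (T : Set (S → S)) : Prop :=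
  IsTokenSystem T ∧
  (∀ P Q : S, P ≠ Q → ∃ m, Concise T m P ∧ mApply m P = Q) ∧
  (∀ (m : List (S → S)) (P : S), IsMsg T m → IsReturn m P → Vacuous m)

/-- Content of a message: its set of tokens. -/
def msgContent (m : List (S → S)) : Set (S → S) := {τ | τ ∈ m}

/-- Token content of a state `P`. -/
def SContent (T : Set (S → S)) (P : S) : Set (S → S) :=
  {τ | ∃ (V : S) (m : List (S → S)), Concise T m V ∧ mApply m V = P ∧ τ ∈ m}

/-- `mr` is the reverse message `τ̃ₙ…τ̃₁` of `m = τ₁…τₙ`. -/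
def IsReverseOfMsg (m mr : List (S → S)) : Prop :=
  List.Forall₂ (fun τ τ' => IsReverse τ τ' ∧ IsReverse τ' τ) m mr.reverse

/-!
Every return message of a medium is vacuous, so it uses each token exactly as often as its
reverse. A concise message uses each of its tokens once and never its reverse; closing a concise
message into a return with a second concise message therefore forces the reverse of each of its
tokens into the second one. This excludes a state whose content holds both `τ` and `τ'`: going
round from the start of one witnessing message through the state, `τ` would be used twice and
`τ'` at most once. Conversely, for `Q` with `τ Q ≠ Q`, concise messages `τ Q ⟶ P ⟶ Q` followed
by the step `τ` form a return, which must use `τ' ≠ τ` as well: if not on the way into `P`, then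
on the concise way out of `P`, whose closing return puts `τ` into the content of `P`.
-/

namespace IsReverse

theorem symm {τ τ' : S → S} (h : IsReverse τ τ') : IsReverse τ' τ :=
  fun P Q hPQ => (h Q P hPQ.symm).symm

theorem unique {τ x y : S → S} (hx : IsReverse τ x) (hy : IsReverse τ y) : x = y := by
  funext R
  by_cases hxR : x R = R
  · by_cases hyR : y R = R
    · rw [hxR, hyR]
    · exact (hx _ _ hyR).mp ((hy _ _ hyR).mpr rfl)
  · exact ((hy _ _ hxR).mp ((hx _ _ hxR).mpr rfl)).symm

end IsReverse

@[simp]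
theorem mApply_cons (τ : S → S) (m : List (S → S)) (P : S) :
    mApply (τ :: m) P = mApply m (τ P) := rfl

@[simp]
theorem mApply_append (m n : List (S → S)) (P : S) :
    mApply (m ++ n) P = mApply n (mApply m P) :=
  List.foldl_append

theorem stepwiseEff_append {m n : List (S → S)} {P : S} :
    StepwiseEff (m ++ n) P ↔ StepwiseEff m P ∧ StepwiseEff n (mApply m P) := by
  induction m generalizing P with
  | nil => simp [StepwiseEff, mApply]
  | cons τ m ih => simp only [List.cons_append, StepwiseEff, ih, mApply_cons, and_assoc]

def IsWalk (T : Set (S → S)) (m : List (S → S)) (P Q : S) : Prop :=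
  IsMsg T m ∧ StepwiseEff m P ∧ mApply m P = Q

namespace IsWalk

variable {T : Set (S → S)} {m n : List (S → S)} {P Q R : S}

theorem singleton {τ : S → S} (hτ : τ ∈ T) (hP : τ P ≠ P) : IsWalk T [τ] P (τ P) :=
  ⟨by simpa [IsMsg] using hτ, ⟨hP, trivial⟩, rfl⟩

theorem append (hm : IsWalk T m P Q) (hn : IsWalk T n Q R) : IsWalk T (m ++ n) P R := by
  obtain ⟨hmT, hmP, rfl⟩ := hm
  obtain ⟨hnT, hnQ, rfl⟩ := hn
  exact ⟨fun τ hτ => (List.mem_append.mp hτ).elim (hmT τ) (hnT τ),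
    stepwiseEff_append.mpr ⟨hmP, hnQ⟩, mApply_append m n P⟩

end IsWalk

theorem Concise.isWalk {T : Set (S → S)} {m : List (S → S)} {P Q : S} (hm : Concise T m P)
    (hmQ : mApply m P = Q) : IsWalk T m P Q :=
  ⟨hm.1, hm.2.2.1, hmQ⟩

theorem concise_nil (T : Set (S → S)) (P : S) : Concise T [] P :=
  ⟨fun _ h => absurd h List.not_mem_nil, fun _ h => absurd h List.not_mem_nil, trivial,
    List.nodup_nil⟩

namespace Vacuous

variable {m : List (S → S)}

theorem count_eq [DecidableEq (S → S)] (hm : Vacuous m) {a b : S → S} (hab : IsReverse a b) :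
    m.count a = m.count b := by
  obtain ⟨σ, -, hσσ, hσ⟩ := hm
  have hcount (c : S → S) : (Finset.univ.filter fun i => m.get i = c).card = m.count c :=
    Fin.card_filter_univ_eq_vector_get_eq_count c ⟨m, rfl⟩
  rw [← hcount a, ← hcount b]
  refine Finset.card_bij' (fun i _ => σ i) (fun i _ => σ i) ?_ ?_
    (fun i _ => hσσ i) (fun i _ => hσσ i)
  · intro i hi
    simp only [Finset.mem_filter, Finset.mem_univ, true_and] at hi ⊢
    exact (hi ▸ hσ i).unique hab
  · intro i hi
    simp only [Finset.mem_filter, Finset.mem_univ, true_and] at hi ⊢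
    exact (hi ▸ hσ i).unique hab.symm

theorem exists_reverse_mem_of_cons {a : S → S} (h : Vacuous (a :: m)) :
    ∃ b ∈ m, IsReverse a b := by
  obtain ⟨σ, hσ, -, hσrev⟩ := h
  have h0 := hσrev ⟨0, Nat.succ_pos _⟩
  rcases hj : σ ⟨0, Nat.succ_pos _⟩ with ⟨_ | k, hk⟩
  · exact absurd hj (hσ _)
  · rw [hj] at h0
    exact ⟨m[k]'(Nat.lt_of_succ_lt_succ hk), List.getElem_mem _, h0⟩

end Vacuous

namespace IsMedium

variable {T : Set (S → S)} (hM : IsMedium T)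
include hM

theorem exists_concise (P Q : S) : ∃ m, Concise T m P ∧ mApply m P = Q := by
  by_cases hPQ : P = Q
  · exact ⟨[], concise_nil T P, hPQ⟩
  · exact hM.2.1 P Q hPQ

theorem exists_apply_ne {τ : S → S} (hτ : τ ∈ T) : ∃ Q, τ Q ≠ Q := by
  by_contra! h
  exact hM.1.2.2 τ hτ (funext h)

theorem vacuous {r : List (S → S)} {P : S} (hr : IsWalk T r P P) : Vacuous r :=
  hM.2.2 r P hr.1 ⟨hr.2.1, hr.2.2⟩

theorem not_isReverse_self {τ : S → S} (hτ : τ ∈ T) : ¬ IsReverse τ τ := by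
  intro hself
  obtain ⟨Q, hQ⟩ := hM.exists_apply_ne hτ
  obtain ⟨m, hm, hmQ⟩ := hM.2.1 (τ Q) Q hQ
  obtain ⟨b, hb, hτb⟩ := (hM.vacuous ((IsWalk.singleton hτ hQ).append (hm.isWalk hmQ)))
    |>.exists_reverse_mem_of_cons
  obtain rfl := hτb.unique hself
  exact hm.2.1 b hb b hb hτb

theorem reverse_mem_and_not_mem_of_concise {m q : List (S → S)} {P Q : S} (hm : Concise T m P)
    (hmQ : mApply m P = Q) (hq : Concise T q Q) (hqP : mApply q Q = P) {τ τ' : S → S}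
    (hτ : τ ∈ m) (hrev : IsReverse τ τ') : τ' ∈ q ∧ τ ∉ q := by
  classical
  have hcount := (hM.vacuous ((hm.isWalk hmQ).append (hq.isWalk hqP))).count_eq hrev
  have hτ'm : m.count τ' = 0 := List.count_eq_zero.mpr fun h => hm.2.1 τ hτ τ' h hrev
  have hτm : m.count τ = 1 := List.count_eq_one_of_mem hm.2.2.2 hτ
  have hτ'q : q.count τ' ≤ 1 := List.nodup_iff_count_le_one.mp hq.2.2.2 τ'
  rw [List.count_append, List.count_append] at hcount
  rw [← List.count_pos_iff, ← List.count_eq_zero]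
  omega

theorem reverse_mem_sContent {m : List (S → S)} {P : S} (hm : Concise T m P) {τ τ' : S → S}
    (hτ : τ ∈ m) (hrev : IsReverse τ τ') : τ' ∈ SContent T P := by
  obtain ⟨q, hq, hqP⟩ := hM.exists_concise (mApply m P) P
  exact ⟨_, q, hq, hqP, (hM.reverse_mem_and_not_mem_of_concise hm rfl hq hqP hτ hrev).1⟩

theorem not_mem_sContent_of_mem {τ τ' : S → S} {P : S} (hτ : τ ∈ SContent T P)
    (hrev : IsReverse τ τ') : τ' ∉ SContent T P := by
  classical
  rintro ⟨W, n, hn, hnP, hτ'n⟩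
  obtain ⟨V, m, hm, hmP, hτm⟩ := hτ
  obtain ⟨q, hq, hqW⟩ := hM.exists_concise P W
  obtain ⟨hτq, hτ'q⟩ := hM.reverse_mem_and_not_mem_of_concise hn hnP hq hqW hτ'n hrev.symm
  obtain ⟨p, hp, hpV⟩ := hM.exists_concise W V
  have hcount := (hM.vacuous ((hm.isWalk hmP).append ((hq.isWalk hqW).append
    (hp.isWalk hpV)))).count_eq hrev
  have hτ'm : m.count τ' = 0 := List.count_eq_zero.mpr fun h => hm.2.1 τ hτm τ' h hrev
  have hτ'p : p.count τ' ≤ 1 := List.nodup_iff_count_le_one.mp hp.2.2.2 τ'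
  have hτm := List.count_pos_iff.mpr hτm
  have hτq := List.count_pos_iff.mpr hτq
  rw [← List.count_eq_zero] at hτ'q
  simp only [List.count_append] at hcount
  omega

theorem mem_sContent_or_mem_sContent {τ τ' : S → S} (hτ : τ ∈ T) (hrev : IsReverse τ τ')
    (P : S) : τ ∈ SContent T P ∨ τ' ∈ SContent T P := by
  classical
  obtain ⟨Q, hQ⟩ := hM.exists_apply_ne hτ
  obtain ⟨b, hb, hbP⟩ := hM.exists_concise (τ Q) P
  obtain ⟨c, hc, hcQ⟩ := hM.exists_concise P Q
  by_cases hτb : τ ∈ b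
  · exact Or.inl ⟨_, b, hb, hbP, hτb⟩
  by_cases hτ'b : τ' ∈ b
  · exact Or.inr ⟨_, b, hb, hbP, hτ'b⟩
  have hτ'c : τ' ∈ c := by
    have hcount := (hM.vacuous ((hb.isWalk hbP).append ((hc.isWalk hcQ).append
      (IsWalk.singleton hτ hQ)))).count_eq hrev
    have hne : τ ≠ τ' := by
      rintro rfl
      exact hM.not_isReverse_self hτ hrev
    rw [← List.count_eq_zero] at hτb hτ'b
    rw [← List.count_pos_iff]
    simp only [List.count_append, List.count_singleton, beq_iff_eq, hne, ↓reduceIte] at hcount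
    omega
  exact Or.inl (hM.reverse_mem_sContent hc hτ'c hrev.symm)

end IsMedium

theorem stmt5_general {T : Set (S → S)} (hM : IsMedium T)
    (τ τ' : S → S) (hτ : τ ∈ T) (hrev : IsReverse τ τ') (P : S) :
    Xor' (τ ∈ SContent T P) (τ' ∈ SContent T P) := by
  rcases hM.mem_sContent_or_mem_sContent hτ hrev P with h | h
  · exact Or.inl ⟨h, hM.not_mem_sContent_of_mem h hrev⟩
  · exact Or.inr ⟨h, fun h' => hM.not_mem_sContent_of_mem h' hrev h⟩

/-- In a medium, for every token `τ` with reverse `τ'` and every state `P`,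
exactly one of `τ`, `τ'` belongs to the token content of `P`. -/
theorem stmt5 {T : Set (S → S)} (hM : IsMedium T)
    (τ τ' : S → S) (hτ : τ ∈ T) (hτ' : τ' ∈ T) (hrev : IsReverse τ τ') (P : S) :
    Xor' (τ ∈ SContent T P) (τ' ∈ SContent T P) :=
  stmt5_general hM τ τ' hτ hrev P
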